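/- arXiv:2106.15059 — 2 statements merged into one kernel-verified Lean document; each statement's English description precedes it below -/
import Mathlib

section
/- Let n = 2q + 1 be odd and k ≥ ⌊n/2⌋ = q. The map sending i ∈ {0,…,n−1} to i·q (mod n) is a bijection of Z_n, and labeling the i-th vertex in this order with i·(k+1−q) gives a radio-k-labeling of C_n when k ≥ n−3, with span (n−1)(k+1−q). -/
/-- Distance between two vertices of the cycle `C_n` (vertices are `Fin n`). -/
def cycleDist (n : ℕ) (u v : Fin n) : ℕ := min (v - u).val (u - v).val

/-- A radio-`k`-labeling of the cycle `C_n`. -/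
def IsRadioLabeling (n k : ℕ) (f : Fin n → ℕ) : Prop :=
  ∀ u v : Fin n, u ≠ v → (k : ℤ) + 1 - cycleDist n u v ≤ |(f u : ℤ) - (f v : ℤ)|

/-- The span of a labeling: largest label minus smallest label. -/
def spanOf (n : ℕ) (f : Fin n → ℕ) : ℕ :=
  Finset.univ.sup fun u => Finset.univ.sup fun v => f u - f v

/-- The radio-`k`-number of `C_n`: minimum span over all radio-`k`-labelings. -/
noncomputable def rn (n k : ℕ) : ℕ :=
  sInf {s | ∃ f : Fin n → ℕ, IsRadioLabeling n k f ∧ spanOf n f = s}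

private lemma fin_val_zero_iff {n : ℕ} [NeZero n] (x : Fin n) : x.val = 0 ↔ x = 0 := by
  constructor
  · intro h; exact Fin.ext h
  · intro h; simp [h]

private lemma fin_sub_add {n : ℕ} [NeZero n] {u v : Fin n} (h : u ≠ v) :
    (v - u).val + (u - v).val = n := by
  have h0 : (v - u) + (u - v) = 0 := by abel
  have hval : ((v - u).val + (u - v).val) % n = 0 := by
    rw [← Fin.val_add, h0, Fin.val_zero]
  have hd : n ∣ (v - u).val + (u - v).val := Nat.dvd_of_mod_eq_zero hval
  have h1 : (v - u).val ≠ 0 := by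
    rw [ne_eq, fin_val_zero_iff, sub_eq_zero]
    exact h.symm
  have h2 : (u - v).val ≠ 0 := by
    rw [ne_eq, fin_val_zero_iff, sub_eq_zero]
    exact h
  have hlt1 := (v - u).isLt
  have hlt2 := (u - v).isLt
  have hle := Nat.le_of_dvd (by omega) hd
  have hz := Nat.eq_zero_of_dvd_of_lt (Nat.dvd_sub hd dvd_rfl) (by omega)
  omega

private lemma cdist_pos {n : ℕ} [NeZero n] {u v : Fin n} (h : u ≠ v) :
    1 ≤ cycleDist n u v := by
  have h1 : (v - u).val ≠ 0 := by
    rw [ne_eq, fin_val_zero_iff, sub_eq_zero]; exact h.symm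
  have h2 : (u - v).val ≠ 0 := by
    rw [ne_eq, fin_val_zero_iff, sub_eq_zero]; exact h
  simp only [cycleDist, le_min_iff]
  omega

private lemma cdist_comm (n : ℕ) (u v : Fin n) : cycleDist n u v = cycleDist n v u :=
  min_comm _ _

/-- If `v = u + q` (mod `n = 2q+1`), the cycle distance is exactly `q`. -/
private lemma dist_step {q : ℕ} (hq : 1 ≤ q) {u v : Fin (2 * q + 1)}
    (hv : v.val = (u.val + q) % (2 * q + 1)) : cycleDist (2 * q + 1) u v = q := by
  have hu : u.val < 2 * q + 1 := u.isLt
  have h1 : (v - u).val = q := by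
    rw [Fin.sub_def]
    show (2 * q + 1 - u.val + v.val) % (2 * q + 1) = q
    rw [hv, Nat.add_mod_mod]
    have e : 2 * q + 1 - u.val + (u.val + q) = (2 * q + 1) + q := by omega
    rw [e, Nat.add_mod_left, Nat.mod_eq_of_lt (by omega)]
  have hne : u ≠ v := by
    intro h
    rw [h, sub_self, Fin.val_zero] at h1
    omega
  have h2 : (u - v).val = q + 1 := by
    have := fin_sub_add hne
    omega
  simp only [cycleDist, h1, h2]
  omega

/-- for `n = 2q+1` odd and `k ≥ n-3` (with `k ≥ q = diam`), jumping by
`q` each time is a bijection of `ℤ_n`, and labeling the `i`-th vertex of this order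
by `i(k+1-q)` is a radio-k-labeling with span `(n-1)(k+1-q)`. -/
theorem stmt10 (q k : ℕ) (hq : 1 ≤ q) (hk : 2 * q + 1 - 3 ≤ k) (hk' : q ≤ k) :
    Function.Bijective (fun i : Fin (2 * q + 1) =>
      (⟨i.val * q % (2 * q + 1), Nat.mod_lt _ (by omega)⟩ : Fin (2 * q + 1))) ∧
    ∀ f : Fin (2 * q + 1) → ℕ,
      (∀ i : Fin (2 * q + 1),
        f ⟨i.val * q % (2 * q + 1), Nat.mod_lt _ (by omega)⟩ = i.val * (k + 1 - q)) →
      IsRadioLabeling (2 * q + 1) k f ∧ spanOf (2 * q + 1) f = 2 * q * (k + 1 - q) := by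
  set σ : Fin (2 * q + 1) → Fin (2 * q + 1) := fun i =>
    (⟨i.val * q % (2 * q + 1), Nat.mod_lt _ (by omega)⟩ : Fin (2 * q + 1)) with hσ
  have hco : Nat.Coprime q (2 * q + 1) := by
    have h := (Nat.coprime_add_mul_left_right q 1 2).mpr (Nat.coprime_one_right q)
    rwa [show 1 + q * 2 = 2 * q + 1 by ring] at h
  have hinj : Function.Injective σ := by
    intro i j h
    have h' : i.val * q % (2 * q + 1) = j.val * q % (2 * q + 1) := congrArg Fin.val h
    have : i.val % (2 * q + 1) = j.val % (2 * q + 1) :=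
      Nat.ModEq.cancel_right_of_coprime hco.symm h'
    rw [Nat.mod_eq_of_lt i.isLt, Nat.mod_eq_of_lt j.isLt] at this
    exact Fin.ext this
  have hbij : Function.Bijective σ := Finite.injective_iff_bijective.mp hinj
  refine ⟨hbij, ?_⟩
  intro f hf
  set c := k + 1 - q with hc
  have hcc : (c : ℤ) = (k : ℤ) + 1 - q := by
    rw [hc, Nat.cast_sub (by omega)]
    push_cast; ring
  have hfσ : ∀ i : Fin (2 * q + 1), f (σ i) = i.val * c := hf
  constructor
  · -- radio labeling
    intro u v huv
    obtain ⟨i, rfl⟩ := hbij.2 u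
    obtain ⟨j, rfl⟩ := hbij.2 v
    have hij : i ≠ j := fun h => huv (congrArg σ h)
    rw [hfσ i, hfσ j]
    have hd1 : 1 ≤ cycleDist (2 * q + 1) (σ i) (σ j) := cdist_pos huv
    have habs : |((i.val * c : ℕ) : ℤ) - ((j.val * c : ℕ) : ℤ)|
        = |(i.val : ℤ) - (j.val : ℤ)| * c := by
      push_cast
      rw [← sub_mul, abs_mul, abs_of_nonneg (by positivity : (0:ℤ) ≤ (c:ℤ))]
    rw [habs]
    have hijv : i.val ≠ j.val := fun h => hij (Fin.ext h)
    by_cases hone : j.val = i.val + 1 ∨ i.val = j.val + 1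
    · -- |i - j| = 1 : consecutive, distance is exactly q
      have hdq : cycleDist (2 * q + 1) (σ i) (σ j) = q := by
        rcases hone with hj | hi
        · apply dist_step hq
          show (j.val * q) % (2 * q + 1) = ((i.val * q) % (2 * q + 1) + q) % (2 * q + 1)
          rw [Nat.mod_add_mod, hj]
          ring_nf
        · rw [cdist_comm]
          apply dist_step hq
          show (i.val * q) % (2 * q + 1) = ((j.val * q) % (2 * q + 1) + q) % (2 * q + 1)
          rw [Nat.mod_add_mod, hi]
          ring_nf
      rw [hdq]
      have h1 : (1 : ℤ) ≤ |(i.val : ℤ) - (j.val : ℤ)| := by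
        rcases abs_cases ((i.val : ℤ) - (j.val : ℤ)) with ⟨he, _⟩ | ⟨he, _⟩ <;> omega
      calc (k : ℤ) + 1 - q ≤ 1 * c := by rw [one_mul]; omega
        _ ≤ |(i.val : ℤ) - (j.val : ℤ)| * c :=
            mul_le_mul_of_nonneg_right h1 (by positivity)
    · -- |i - j| ≥ 2
      have hsep : i.val + 2 ≤ j.val ∨ j.val + 2 ≤ i.val := by omega
      have h2 : (2 : ℤ) ≤ |(i.val : ℤ) - (j.val : ℤ)| := by
        rcases abs_cases ((i.val : ℤ) - (j.val : ℤ)) with ⟨he, _⟩ | ⟨he, _⟩ <;> omega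
      have hstep : (k : ℤ) + 1 - cycleDist (2 * q + 1) (σ i) (σ j) ≤ 2 * c := by
        have hd1' : (1 : ℤ) ≤ (cycleDist (2 * q + 1) (σ i) (σ j) : ℤ) := by
          exact_mod_cast hd1
        omega
      calc (k : ℤ) + 1 - cycleDist (2 * q + 1) (σ i) (σ j) ≤ 2 * c := hstep
        _ ≤ |(i.val : ℤ) - (j.val : ℤ)| * c :=
            mul_le_mul_of_nonneg_right h2 (by positivity)
  · -- span
    apply le_antisymm
    · apply Finset.sup_le
      intro u _
      apply Finset.sup_le
      intro v _
      obtain ⟨i, rfl⟩ := hbij.2 u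
      calc f (σ i) - f v ≤ f (σ i) := Nat.sub_le _ _
        _ = i.val * c := hfσ i
        _ ≤ 2 * q * c := Nat.mul_le_mul_right _ (by omega)
    · have h0 : f (σ ⟨0, by omega⟩) = 0 := by simp [hfσ]
      have h2q : f (σ ⟨2 * q, by omega⟩) = 2 * q * c := hfσ _
      calc 2 * q * c = f (σ ⟨2 * q, by omega⟩) - f (σ ⟨0, by omega⟩) := by
            rw [h0, h2q]; omega
        _ ≤ Finset.univ.sup fun v => f (σ ⟨2 * q, by omega⟩) - f v :=
            Finset.le_sup (f := fun v => f (σ ⟨2 * q, by omega⟩) - f v) (Finset.mem_univ _)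
        _ ≤ spanOf (2 * q + 1) f :=
            Finset.le_sup (f := fun u => Finset.univ.sup fun v => f u - f v)
              (Finset.mem_univ _)
end

section
/- Suppose n is even, k odd, n/2 ≤ k < n−3, h = (n−k−1)/2, and p = gcd(n,h). Then rn_k(C_n) ≥ LB(n,k) + ⌈p/2⌉ − 1, where LB(n,k) = ⌈(3k+3−n)/2⌉·(n−2)/2 + k − n/2 + 1. -/
lemma sub_val_add {n : ℕ} [NeZero n] {u v : Fin n} (huv : u ≠ v) :
    (v - u).val + (u - v).val = n := by
  have h0 : (v - u) + (u - v) = 0 := by abel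
  have hval : ((v - u).val + (u - v).val) % n = 0 := by
    have := congrArg Fin.val h0
    rwa [Fin.val_add, Fin.val_zero] at this
  have hdvd : n ∣ (v - u).val + (u - v).val := Nat.dvd_of_mod_eq_zero hval
  obtain ⟨c, hc⟩ := hdvd
  have h1 : (v - u).val < n := (v - u).isLt
  have h2 : (u - v).val < n := (u - v).isLt
  have hne : (v - u) ≠ 0 := sub_ne_zero.mpr (Ne.symm huv)
  have hne' : (v - u).val ≠ 0 := fun h => hne (Fin.ext h)
  have hc2 : c < 2 := by
    by_contra hcc
    push_neg at hcc
    have : 2 * n ≤ n * c := by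
      calc 2 * n = n * 2 := by ring
      _ ≤ n * c := Nat.mul_le_mul_left n hcc
    omega
  interval_cases c <;> omega

lemma val_add_sub {n : ℕ} [NeZero n] (u v : Fin n) :
    v.val = (u.val + (v - u).val) % n := by
  have h0 : u + (v - u) = v := add_sub_cancel u v
  have := congrArg Fin.val h0
  rw [Fin.val_add] at this
  omega

lemma cycleDist_le_half {n : ℕ} (u v : Fin n) : cycleDist n u v ≤ n / 2 := by
  rcases Nat.eq_zero_or_pos n with h | h
  · exact absurd u.isLt (by omega)
  haveI : NeZero n := ⟨by omega⟩
  rcases eq_or_ne u v with rfl | huv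
  · unfold cycleDist
    rw [sub_self]
    simp
  · have := sub_val_add huv
    unfold cycleDist
    omega

lemma cycleDist_comm {n : ℕ} (u v : Fin n) : cycleDist n u v = cycleDist n v u := by
  unfold cycleDist; omega

lemma cycleDist_triangle {n : ℕ} [NeZero n] {u v w : Fin n}
    (huv : u ≠ v) (hvw : v ≠ w) (huw : u ≠ w) :
    cycleDist n u v + cycleDist n v w + cycleDist n u w ≤ n := by
  set a := (v - u).val with ha
  set b := (w - v).val with hb
  have hab : (w - u) = (v - u) + (w - v) := by abel
  have hwu : (w - u).val = (a + b) % n := by rw [hab, Fin.val_add]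
  have h1 : a + (u - v).val = n := sub_val_add huv
  have h2 : b + (v - w).val = n := sub_val_add hvw
  have h3 : (w - u).val + (u - w).val = n := sub_val_add huw
  have hd1 : cycleDist n u v = min a (n - a) := by unfold cycleDist; omega
  have hd2 : cycleDist n v w = min b (n - b) := by unfold cycleDist; omega
  have hd3 : cycleDist n u w = min ((w-u).val) (n - (w-u).val) := by
    unfold cycleDist; omega
  have ha1 : 0 < a := by
    have : (v - u) ≠ 0 := sub_ne_zero.mpr (Ne.symm huv)
    have : (v - u).val ≠ 0 := fun hh => this (Fin.ext hh)
    omega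
  have hb1 : 0 < b := by
    have : (w - v) ≠ 0 := sub_ne_zero.mpr (Ne.symm hvw)
    have : (w - v).val ≠ 0 := fun hh => this (Fin.ext hh)
    omega
  have han : a < n := (v - u).isLt
  have hbn : b < n := (w - v).isLt
  rcases lt_or_ge (a + b) n with hlt | hge
  · have : (a + b) % n = a + b := Nat.mod_eq_of_lt hlt
    omega
  · have hne : a + b ≠ n := by
      intro hcon
      have : (a + b) % n = 0 := by rw [hcon]; simp
      have : (w - u).val = 0 := by omega
      have : (w - u) = 0 := Fin.ext (by simp [this])
      exact huw (sub_eq_zero.mp this).symm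
    have : (a + b) % n = a + b - n := by
      rw [Nat.mod_eq_sub_mod hge, Nat.mod_eq_of_lt (by omega)]
    omega

lemma key_lemma (n k : ℕ) (he : Even n) (hko : Odd k) (h1 : n / 2 ≤ k) (h2 : k < n - 3)
    (f : Fin n → ℕ) (hf : IsRadioLabeling n k f) :
    (3 * k + 3 - n) / 2 * ((n - 2) / 2) + (k - n / 2) + 1 +
      ((Nat.gcd n ((n - k - 1) / 2) + 1) / 2 - 1) ≤ spanOf n f := by
  classical
  obtain ⟨a, ha⟩ := he
  obtain ⟨b, hb⟩ := hko
  have hn8 : 8 ≤ n := by omega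
  have hn : 0 < n := by omega
  haveI : NeZero n := ⟨by omega⟩
  have hka : n / 2 = a := by omega
  -- abbreviations, folding the goal
  set h : ℕ := (n - k - 1) / 2 with hhdef
  set p : ℕ := Nat.gcd n h with hpdef
  set Φn : ℕ := (3 * k + 3 - n) / 2 with hPhidef
  set m : ℕ := (n - 2) / 2 with hmdef
  have hh : 2 * h = n - k - 1 := by omega
  have hΦ : 2 * Φn = 3 * k + 3 - n := by omega
  have hm : 2 * m = n - 2 := by omega
  have hnk : n ≤ 3 * k + 3 := by omega
  have hhpos : 2 ≤ h := by omega
  have hp_dvd_n : p ∣ n := Nat.gcd_dvd_left n h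
  have hp_dvd_h : p ∣ h := Nat.gcd_dvd_right n h
  have hppos : 0 < p := Nat.gcd_pos_of_pos_left h hn
  have hph : p ≤ h := Nat.le_of_dvd (by omega) hp_dvd_h
  set w : ℕ := n / p with hwdef
  have hpw : p * w = n := Nat.mul_div_cancel' hp_dvd_n
  have hw2 : 2 ≤ w := by
    by_contra hcon
    push_neg at hcon
    interval_cases w <;> omega
  -- f is injective
  have hfinj : Function.Injective f := by
    intro u v huv
    by_contra hne
    have hd := cycleDist_le_half u v
    have hr := hf u v hne
    rw [huv] at hr
    simp only [sub_self, abs_zero] at hr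
    have hc : (cycleDist n u v : ℤ) ≤ (a : ℤ) := by exact_mod_cast le_trans hd (by omega)
    have hak : (a : ℤ) ≤ (k : ℤ) := by exact_mod_cast (by omega : a ≤ k)
    linarith
  -- sorted ordering
  set σ : Equiv.Perm (Fin n) := Tuple.sort f with hσdef
  have hmono : Monotone (f ∘ σ) := Tuple.monotone_sort f
  have hstrict : StrictMono (f ∘ σ) :=
    hmono.strictMono_of_injective (hfinj.comp σ.injective)
  set x : ℕ → Fin n := fun i => σ ⟨i % n, Nat.mod_lt _ hn⟩ with hxdef
  have hxinj : ∀ i j, i < n → j < n → x i = x j → i = j := by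
    intro i j hi hj hxy
    simp only [hxdef] at hxy
    have h2' := σ.injective hxy
    have h3' := congrArg Fin.val h2'
    simp only at h3'
    rwa [Nat.mod_eq_of_lt hi, Nat.mod_eq_of_lt hj] at h3'
  set L : ℕ → ℤ := fun i => (f (x i) : ℤ) with hLdef
  have hLlt : ∀ i j, i < j → j < n → L i < L j := by
    intro i j hij hj
    have hi : i < n := lt_trans hij hj
    have hfin : (⟨i % n, Nat.mod_lt _ hn⟩ : Fin n) < ⟨j % n, Nat.mod_lt _ hn⟩ := by
      rw [Fin.mk_lt_mk, Nat.mod_eq_of_lt hi, Nat.mod_eq_of_lt hj]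
      exact hij
    have := hstrict hfin
    simp only [Function.comp] at this
    simp only [hLdef, hxdef]
    exact_mod_cast this
  have hrad : ∀ i j, i < j → j < n →
      (k : ℤ) + 1 - (cycleDist n (x i) (x j) : ℤ) ≤ L j - L i := by
    intro i j hij hj
    have hi : i < n := lt_trans hij hj
    have hne : x i ≠ x j := fun hcon => by
      have := hxinj i j hi hj hcon; omega
    have hr := hf (x i) (x j) hne
    rw [abs_sub_comm, abs_of_nonneg (sub_nonneg.mpr (le_of_lt (hLlt i j hij hj)))] at hr
    exact hr
  -- pair bound and tightness
  have hpair : ∀ i, i + 2 < n →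
      ((Φn : ℤ) ≤ L (i + 2) - L i ∧
        (L (i + 2) - L i = (Φn : ℤ) → cycleDist n (x i) (x (i + 2)) = h)) := by
    intro i hi
    have r1 := hrad i (i + 1) (by omega) (by omega)
    have r2 := hrad (i + 1) (i + 2) (by omega) hi
    have r3 := hrad i (i + 2) (by omega) hi
    have hne01 : x i ≠ x (i + 1) := fun hcon => by
      have := hxinj i (i + 1) (by omega) (by omega) hcon; omega
    have hne12 : x (i + 1) ≠ x (i + 2) := fun hcon => by
      have := hxinj (i + 1) (i + 2) (by omega) (by omega) hcon; omega
    have hne02 : x i ≠ x (i + 2) := fun hcon => by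
      have := hxinj i (i + 2) (by omega) (by omega) hcon; omega
    have tri := cycleDist_triangle hne01 hne12 hne02
    constructor
    · omega
    · intro heq
      omega
  -- window lemma
  have hwindow : ∀ t, t + 1 ≤ m / w →
      ∃ j, t * w ≤ j ∧ j < t * w + w ∧ (Φn : ℤ) + 1 ≤ L (2 * j + 2) - L (2 * j) := by
    intro t ht
    by_contra hcon
    push_neg at hcon
    set A := t * w with hA
    have hbound : A + w ≤ m := by
      have hb1 : (t + 1) * w ≤ m / w * w := Nat.mul_le_mul_right w ht
      have hb2 : m / w * w ≤ m := Nat.div_mul_le_self m w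
      have hb3 : (t + 1) * w = A + w := by ring
      omega
    have hres : ∀ i, i ≤ w → (x (2 * (A + i))).val % p = (x (2 * A)).val % p := by
      intro i hi
      induction i with
      | zero => norm_num
      | succ i ih =>
        have hi' : i ≤ w := by omega
        have hidx : 2 * (A + i) + 2 < n := by omega
        have hpr := hpair (2 * (A + i)) hidx
        have heq : L (2 * (A + i) + 2) - L (2 * (A + i)) = (Φn : ℤ) := by
          have hlt := hcon (A + i) (by omega) (by omega)
          have hge := hpr.1
          omega
        have hd := hpr.2 heq
        set u := x (2 * (A + i)) with hu
        set v := x (2 * (A + i) + 2) with hv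
        have hneuv : u ≠ v := fun hcon2 => by
          have := hxinj (2 * (A + i)) (2 * (A + i) + 2) (by omega) (by omega) hcon2
          omega
        have hsum := sub_val_add hneuv
        have hmin : min (v - u).val (u - v).val = h := hd
        have hcases : (v - u).val = h ∨ (v - u).val = n - h := by omega
        have hs3 : p ∣ (v - u).val := by
          rcases hcases with hc | hc
          · rw [hc]; exact hp_dvd_h
          · rw [hc]; exact Nat.dvd_sub hp_dvd_n hp_dvd_h
        obtain ⟨c, hc⟩ := hs3
        have hvv := val_add_sub u v
        have hv1 : v.val % p = (u.val + (v - u).val) % n % p := by rw [← hvv]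
        rw [Nat.mod_mod_of_dvd _ hp_dvd_n, hc, Nat.add_mul_mod_self_left] at hv1
        have hfin : (x (2 * (A + (i + 1)))).val = v.val := by
          have : 2 * (A + (i + 1)) = 2 * (A + i) + 2 := by ring
          rw [this, hv]
        rw [hfin, hv1]
        exact ih hi'
    -- cardinality contradiction
    have hQlt : ∀ i, i ≤ w → (x (2 * (A + i))).val / p < w := by
      intro i hi
      have hlt : (x (2 * (A + i))).val < p * w := by
        rw [hpw]; exact (x (2 * (A + i))).isLt
      exact Nat.div_lt_of_lt_mul hlt
    have hQinj : Set.InjOn (fun i => (x (2 * (A + i))).val / p) (Finset.range (w + 1)) := by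
      intro i hi j hj hij
      simp only [Finset.coe_range, Set.mem_Iio] at hi hj
      have hri := hres i (by omega)
      have hrj := hres j (by omega)
      have hvaleq : (x (2 * (A + i))).val = (x (2 * (A + j))).val := by
        simp only at hij
        have e1 : (x (2 * (A + i))).val
            = p * ((x (2 * (A + i))).val / p) + (x (2 * (A + i))).val % p :=
          (Nat.div_add_mod _ p).symm
        have e2 : (x (2 * (A + j))).val
            = p * ((x (2 * (A + j))).val / p) + (x (2 * (A + j))).val % p :=
          (Nat.div_add_mod _ p).symm
        rw [hri, hij] at e1
        rw [hrj] at e2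
        omega
      have hxeq : x (2 * (A + i)) = x (2 * (A + j)) := Fin.ext hvaleq
      have := hxinj (2 * (A + i)) (2 * (A + j)) (by omega) (by omega) hxeq
      omega
    have hsub : Finset.image (fun i => (x (2 * (A + i))).val / p) (Finset.range (w + 1))
        ⊆ Finset.range w := by
      intro y hy
      obtain ⟨i, hi, rfl⟩ := Finset.mem_image.mp hy
      exact Finset.mem_range.mpr (hQlt i (by simp at hi; omega))
    have hcard := Finset.card_le_card hsub
    rw [Finset.card_image_of_injOn hQinj, Finset.card_range, Finset.card_range] at hcard
    omega
  -- counting non-tight pairs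
  set NT : Finset ℕ :=
    (Finset.range m).filter (fun j => (Φn : ℤ) + 1 ≤ L (2 * j + 2) - L (2 * j)) with hNTdef
  set M := m / w with hMdef
  have hMcard : M ≤ NT.card := by
    have hex : ∀ t, t < M → ∃ j, t * w ≤ j ∧ j < t * w + w ∧
        (Φn : ℤ) + 1 ≤ L (2 * j + 2) - L (2 * j) := fun t ht => hwindow t (by omega)
    set F : ℕ → ℕ := fun t => if ht : t < M then (hex t ht).choose else 0 with hFdef
    have hFspec : ∀ t, t < M → t * w ≤ F t ∧ F t < t * w + w ∧
        (Φn : ℤ) + 1 ≤ L (2 * (F t) + 2) - L (2 * (F t)) := by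
      intro t ht
      simp only [hFdef, dif_pos ht]
      exact (hex t ht).choose_spec
    have hmaps : ∀ t ∈ Finset.range M, F t ∈ NT := by
      intro t ht
      rw [Finset.mem_range] at ht
      obtain ⟨hs1, hs2, hs3⟩ := hFspec t ht
      rw [hNTdef, Finset.mem_filter, Finset.mem_range]
      refine ⟨?_, hs3⟩
      have hb1 : (t + 1) * w ≤ M * w := Nat.mul_le_mul_right w (by omega)
      have hb2 : M * w ≤ m := by rw [hMdef]; exact Nat.div_mul_le_self m w
      have hb3 : (t + 1) * w = t * w + w := by ring
      omega
    have hFinj : Set.InjOn F (Finset.range M) := by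
      have hord : ∀ s t, s < t → t < M → F s < F t := by
        intro s t hst htM
        obtain ⟨a1, a2, _⟩ := hFspec s (by omega)
        obtain ⟨b1, b2, _⟩ := hFspec t htM
        have : (s + 1) * w ≤ t * w := Nat.mul_le_mul_right w (by omega)
        have : (s + 1) * w = s * w + w := by ring
        omega
      intro s hs t ht hst
      simp only [Finset.coe_range, Set.mem_Iio] at hs ht
      rcases lt_trichotomy s t with hc | hc | hc
      · exact absurd hst (Nat.ne_of_lt (hord s t hc ht))
      · exact hc
      · exact absurd hst.symm (Nat.ne_of_lt (hord t s hc hs))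
    calc M = (Finset.range M).card := (Finset.card_range M).symm
    _ ≤ NT.card := Finset.card_le_card_of_injOn F hmaps hFinj
  -- telescoping sum bound
  have htel : ∑ j ∈ Finset.range m, (L (2 * (j + 1)) - L (2 * j)) = L (2 * m) - L 0 :=
    Finset.sum_range_sub (fun j => L (2 * j)) m
  have htel' : ∑ j ∈ Finset.range m, (L (2 * j + 2) - L (2 * j)) = L (2 * m) - L 0 := by
    rw [← htel]
    apply Finset.sum_congr rfl
    intro j _
    have : 2 * (j + 1) = 2 * j + 2 := by ring
    rw [this]
  have hsum1 : (m : ℤ) * (Φn : ℤ) + (NT.card : ℤ) ≤ L (2 * m) - L 0 := by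
    rw [← htel']
    have hstep : ∀ j ∈ Finset.range m,
        (Φn : ℤ) + (if j ∈ NT then (1 : ℤ) else 0) ≤ L (2 * j + 2) - L (2 * j) := by
      intro j hj
      rw [Finset.mem_range] at hj
      have hjm : 2 * j + 2 < n := by omega
      have hp1 := (hpair (2 * j) hjm).1
      by_cases hjN : j ∈ NT
      · rw [if_pos hjN]
        have hprop := (Finset.mem_filter.mp hjN).2
        linarith
      · rw [if_neg hjN]
        linarith
    have hsum := Finset.sum_le_sum hstep
    rw [Finset.sum_add_distrib, Finset.sum_const, Finset.card_range] at hsum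
    have hite : ∑ j ∈ Finset.range m, (if j ∈ NT then (1 : ℤ) else 0) = (NT.card : ℤ) := by
      rw [Finset.sum_ite_mem]
      have hint : Finset.range m ∩ NT = NT :=
        Finset.inter_eq_right.mpr (Finset.filter_subset _ _)
      rw [hint, Finset.sum_const, Finset.card_def]
      simp
    rw [hite] at hsum
    calc (m : ℤ) * (Φn : ℤ) + (NT.card : ℤ) = m • (Φn : ℤ) + (NT.card : ℤ) := by
          rw [nsmul_eq_mul]
    _ ≤ ∑ j ∈ Finset.range m, (L (2 * j + 2) - L (2 * j)) := hsum
  -- last gap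
  have hlast : (k : ℤ) + 1 - (a : ℤ) ≤ L (n - 1) - L (2 * m) := by
    have hr := hrad (2 * m) (n - 1) (by omega) (by omega)
    have hd := cycleDist_le_half (x (2 * m)) (x (n - 1))
    have hc : (cycleDist n (x (2 * m)) (x (n - 1)) : ℤ) ≤ (a : ℤ) := by
      exact_mod_cast le_trans hd (by omega)
    linarith
  -- span bound
  have hspan : L (n - 1) - L 0 ≤ (spanOf n f : ℤ) := by
    have h0n : f (x 0) ≤ f (x (n - 1)) := by
      have := hLlt 0 (n - 1) (by omega) (by omega)
      simp only [hLdef] at this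
      exact_mod_cast le_of_lt this
    have hle : f (x (n - 1)) - f (x 0) ≤ spanOf n f := by
      calc f (x (n - 1)) - f (x 0)
          ≤ Finset.univ.sup (fun v => f (x (n - 1)) - f v) :=
            Finset.le_sup (f := fun v => f (x (n - 1)) - f v) (Finset.mem_univ (x 0))
      _ ≤ spanOf n f :=
            Finset.le_sup (f := fun u => Finset.univ.sup fun v => f u - f v)
              (Finset.mem_univ (x (n - 1)))
    have hcast : ((f (x (n - 1)) - f (x 0) : ℕ) : ℤ) = L (n - 1) - L 0 := by
      simp only [hLdef]
      push_cast [Nat.cast_sub h0n]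
      ring
    calc L (n - 1) - L 0 = ((f (x (n - 1)) - f (x 0) : ℕ) : ℤ) := hcast.symm
    _ ≤ (spanOf n f : ℤ) := by exact_mod_cast hle
  -- arithmetic: qm ≤ M
  obtain ⟨qm, hqm⟩ : ∃ q, q + 1 = (p + 1) / 2 := ⟨(p + 1) / 2 - 1, by omega⟩
  have hqmM : qm ≤ M := by
    rw [hMdef, Nat.le_div_iff_mul_le (by omega : 0 < w)]
    rcases Nat.even_or_odd p with ⟨e, hpe⟩ | ⟨e, hpe⟩
    · -- p = e + e
      have he1 : 1 ≤ e := by omega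
      have hqe : qm = e - 1 := by omega
      have hX : n = 2 * (e * w) := by rw [← hpw, hpe]; ring
      have hsubmul : (e - 1) * w = e * w - w := by
        rw [Nat.sub_mul, one_mul]
      have hew : w ≤ e * w := Nat.le_mul_of_pos_left w (by omega)
      rw [hqe, hsubmul]
      omega
    · -- p = 2e+1
      have hqe : qm = e := by omega
      have hweven : ∃ w', w = 2 * w' := by
        rcases Nat.even_or_odd w with ⟨w', hw'⟩ | ⟨w', hw'⟩
        · exact ⟨w', by omega⟩
        · exfalso
          obtain ⟨G, hG⟩ : ∃ G, n = 2 * G + 1 :=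
            ⟨2 * (e * w') + e + w', by rw [← hpw, hpe, hw']; ring⟩
          omega
      obtain ⟨w', hw'⟩ := hweven
      obtain ⟨X, hX1, hX2⟩ : ∃ X, e * (2 * w') = 2 * X ∧ n = 2 * (2 * X + w') :=
        ⟨e * w', by ring, by rw [← hpw, hpe, hw']; ring⟩
      rw [hqe, hw', hX1]
      omega
  -- final assembly
  obtain ⟨qn, hqn⟩ : ∃ q, q = (p + 1) / 2 - 1 := ⟨(p + 1) / 2 - 1, rfl⟩
  have hqq : qn = qm := by omega
  rw [← hqn, hqq, hka]
  have hgoalZ : ((Φn * m + (k - a) + 1 + qm : ℕ) : ℤ) ≤ (spanOf n f : ℤ) := by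
    have hc1 : ((Φn * m + (k - a) + 1 + qm : ℕ) : ℤ)
        = (Φn : ℤ) * (m : ℤ) + ((k : ℤ) - (a : ℤ)) + 1 + (qm : ℤ) := by
      push_cast [Nat.cast_sub (show a ≤ k by omega)]
      ring
    rw [hc1]
    have hMZ : (qm : ℤ) ≤ (NT.card : ℤ) := by exact_mod_cast le_trans hqmM hMcard
    have hLsplit : L (n - 1) - L 0 = (L (n - 1) - L (2 * m)) + (L (2 * m) - L 0) := by ring
    linarith [hsum1, hlast, hspan]
  exact_mod_cast hgoalZ

lemma exists_radio_labeling (n k : ℕ) : ∃ f : Fin n → ℕ, IsRadioLabeling n k f := by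
  refine ⟨fun i => i.val * (k + 1), ?_⟩
  intro u v huv
  have hvv : u.val ≠ v.val := fun hc => huv (Fin.ext hc)
  have h1 : (1 : ℤ) ≤ |(u.val : ℤ) - (v.val : ℤ)| := by
    have hne : (u.val : ℤ) - (v.val : ℤ) ≠ 0 := sub_ne_zero.mpr (by exact_mod_cast hvv)
    exact Int.one_le_abs hne
  have hd : (0 : ℤ) ≤ (cycleDist n u v : ℤ) := by positivity
  have hmain : (k : ℤ) + 1 ≤ |((u.val * (k + 1) : ℕ) : ℤ) - ((v.val * (k + 1) : ℕ) : ℤ)| := by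
    have heq : ((u.val * (k + 1) : ℕ) : ℤ) - ((v.val * (k + 1) : ℕ) : ℤ)
        = ((u.val : ℤ) - (v.val : ℤ)) * ((k : ℤ) + 1) := by push_cast; ring
    rw [heq, abs_mul, abs_of_nonneg (show (0 : ℤ) ≤ (k : ℤ) + 1 by positivity)]
    nlinarith
  calc (k : ℤ) + 1 - (cycleDist n u v : ℤ) ≤ (k : ℤ) + 1 := by linarith
  _ ≤ _ := hmain

/-- `n` even, `k` odd, `n/2 ≤ k < n-3`, `h = (n-k-1)/2`, `p = gcd(n,h)`:
`rn_k(C_n) ≥ LB(n,k) + ⌈p/2⌉ - 1` where `LB(n,k) = ⌈(3k+3-n)/2⌉·(n-2)/2 + k - n/2 + 1`. -/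
theorem stmt15 (n k : ℕ) (he : Even n) (hko : Odd k) (h1 : n / 2 ≤ k) (h2 : k < n - 3) :
    (3 * k + 3 - n) / 2 * ((n - 2) / 2) + (k - n / 2) + 1 +
      ((Nat.gcd n ((n - k - 1) / 2) + 1) / 2 - 1) ≤ rn n k := by
  have hne : {s | ∃ f : Fin n → ℕ, IsRadioLabeling n k f ∧ spanOf n f = s}.Nonempty := by
    obtain ⟨f, hf⟩ := exists_radio_labeling n k
    exact ⟨spanOf n f, f, hf, rfl⟩
  refine le_csInf hne ?_
  rintro s ⟨f, hf, rfl⟩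
  exact key_lemma n k he hko h1 h2 f hf
end
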